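/- arXiv:2010.03417 — 5 statements merged into one kernel-verified Lean document; each statement's English description precedes it below -/
import Mathlib

section
/- For 1 ≤ j ≤ n, the number of fully commutative elements of W(A_n) whose normal form ends with the generator σ_j (i.e., with j_p = j) equals (j/(n+1)) * binomial(2n-j+1, n), an entry of the Catalan triangle. -/
open Polynomial Finset

open Fin.NatCast in
/-- The `i`-th Coxeter generator of `W(A_n)`, viewed as the adjacent transposition
`(i-1, i)` of `Fin (n+1)` (generators are indexed `1 ≤ i ≤ n`). -/
def sig (n i : ℕ) : Equiv.Perm (Fin (n+1)) :=
  Equiv.swap ((i-1 : ℕ) : Fin (n+1)) ((i : ℕ) : Fin (n+1))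

/-- A word in the generators `σ_1, ..., σ_n`. -/
def IsWord (n : ℕ) (w : List ℕ) : Prop := ∀ i ∈ w, 1 ≤ i ∧ i ≤ n

/-- The product of a word of generators. -/
def wprod (n : ℕ) (w : List ℕ) : Equiv.Perm (Fin (n+1)) := (w.map (sig n)).prod

/-- The Coxeter length of an element of `W(A_n)`. -/
noncomputable def len (n : ℕ) (g : Equiv.Perm (Fin (n+1))) : ℕ :=
  sInf {k | ∃ w : List ℕ, IsWord n w ∧ wprod n w = g ∧ w.length = k}

/-- A reduced word. -/
def Reduced (n : ℕ) (w : List ℕ) : Prop :=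
  IsWord n w ∧ w.length = len n (wprod n w)

/-- One commutation move `... i j ... ↦ ... j i ...` with `|i - j| ≥ 2`. -/
inductive CommMove : List ℕ → List ℕ → Prop
  | swap (a b : List ℕ) (i j : ℕ) (h : i + 2 ≤ j ∨ j + 2 ≤ i) :
      CommMove (a ++ i :: j :: b) (a ++ j :: i :: b)

/-- `g ∈ W(A_n)` is fully commutative if any two reduced words for `g` are related
by a sequence of commutation moves. -/
def FC (n : ℕ) (g : Equiv.Perm (Fin (n+1))) : Prop :=
  ∀ w w' : List ℕ, Reduced n w → Reduced n w' → wprod n w = g → wprod n w' = g →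
    Relation.ReflTransGen CommMove w w'

/-- The data `(i_1,j_1), ..., (i_p,j_p)` of a Stembridge normal form:
`n ≥ j_1 > ⋯ > j_p ≥ 1`, `n ≥ i_1 > ⋯ > i_p ≥ 1`, `i_t ≤ j_t`, `0 ≤ p ≤ n`. -/
def NFData (n : ℕ) (L : List (ℕ × ℕ)) : Prop :=
  L.length ≤ n ∧ L.Chain' (fun a b => b.1 < a.1 ∧ b.2 < a.2) ∧
    ∀ p ∈ L, 1 ≤ p.1 ∧ p.1 ≤ p.2 ∧ p.2 ≤ n

/-- The word `⌈i_1,j_1⌉⌈i_2,j_2⌉⋯⌈i_p,j_p⌉` where `⌈i,j⌉ = σ_i σ_{i+1} ⋯ σ_j`. -/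
def nfWord (L : List (ℕ × ℕ)) : List ℕ :=
  (L.map (fun p => List.Ico p.1 (p.2 + 1))).flatten

/-- `A_n^j`: fully commutative elements whose normal form ends with `σ_j`, i.e. `j_p = j`. -/
def Anj (n j : ℕ) : Set (Equiv.Perm (Fin (n+1))) :=
  {g | ∃ L : List (ℕ × ℕ), NFData n L ∧ wprod n (nfWord L) = g ∧
       ∃ h : L ≠ [], (L.getLast h).2 = j}

/-- `a_n^j(q) = ∑_{w ∈ A_n^j} q^{l(w)}`. -/
noncomputable def anj (n j : ℕ) : Polynomial ℤ :=
  ∑ g ∈ (Set.toFinite (Anj n j)).toFinset, X ^ len n g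

/-- The Poincaré polynomial `a_n(q) = ∑_{w ∈ W^c(A_n)} q^{l(w)}`. -/
noncomputable def apoly (n : ℕ) : Polynomial ℤ :=
  ∑ g ∈ (Set.toFinite {g : Equiv.Perm (Fin (n+1)) | FC n g}).toFinset, X ^ len n g

/-- The defining conditions for the family `B_j^k`, `1 ≤ k ≤ j`. -/
def Bfam (B : ℕ → ℕ → Polynomial ℤ) : Prop :=
  (∀ j, 1 ≤ j → B j 1 = 1) ∧
  (∀ j, 2 ≤ j → B j j = ∏ t ∈ Finset.Icc 2 j, (1 - X ^ t)) ∧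
  (∀ j k, 2 ≤ k → k ≤ j - 1 →
    B j k = B (j-1) k + (1 - X ^ j) * B (j-1) (k-1) - B (j-2) (k-1))

/-- The defining conditions for the family `b_j^k = B_j^{j-k+1}`, `1 ≤ k ≤ j`. -/
def bfam (b : ℕ → ℕ → Polynomial ℤ) : Prop :=
  (∀ j, 1 ≤ j → b j j = 1) ∧
  (∀ j, 2 ≤ j → b j 1 = ∏ t ∈ Finset.Icc 2 j, (1 - X ^ t)) ∧
  (∀ j k, 2 ≤ k → k ≤ j - 1 →
    b j k = b (j-1) (k-1) + (1 - X ^ j) * b (j-1) k - b (j-2) (k-1))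

/-- `ψ(k) = q^2 + ⋯ + q^{k+1}`. -/
noncomputable def psi (k : ℕ) : Polynomial ℤ := ∑ t ∈ Finset.Icc 2 (k+1), X ^ t

/-- `Π(u,v) = ∏_{t=u}^{v} (1 - q^t)` (empty product `1` if `u > v`). -/
noncomputable def PiPoly (u v : ℕ) : Polynomial ℤ := ∏ t ∈ Finset.Icc u v, (1 - X ^ t)

/-- `ΣΠ(a,b)[l_1, …, l_u]`: the sum over all `(i_1, …, i_u)` with `a ≤ i_1`,
`i_t + l_t ≤ i_{t+1}`, `i_u + l_u - 1 ≤ b`, of `Π(a,b)` where for each `t` the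
consecutive factors `(1-q^{i_t})⋯(1-q^{i_t+l_t-1})` are replaced by `-q^{i_t}`. -/
noncomputable def SigmaPi : ℕ → ℕ → List ℕ → Polynomial ℤ
  | a, b, [] => PiPoly a b
  | a, b, l :: ls => ∑ i ∈ Finset.Icc a (b + 1 - (l + ls.sum)),
      PiPoly a (i-1) * (-X ^ i) * SigmaPi (i + l) b ls

/-- The polynomials `b(j,k,t)` of Theorem 3.3. -/
noncomputable def bjkt (j k t : ℕ) : Polynomial ℤ :=
  if t = k then PiPoly (k+2) j
  else ∑ u ∈ Finset.Icc 1 (min (j-k-1) (k-t)),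
    ∑ c ∈ Finset.univ.filter (fun c : Composition (k-t) => c.length = u),
      SigmaPi (t+2) j (c.blocks.map (· + 1))

/-- The product `∏ b_{v_u}^{v_{u+1}}` along a chain `[v_0, v_1, …]`. -/
def chainProd {A : Type*} [CommRing A] (b : ℕ → ℕ → A) : List ℕ → A
  | [] => 1
  | [_] => 1
  | x :: y :: rest => b x y * chainProd b (y :: rest)

/-- The sum over all strictly decreasing chains `n = v_0 > v_1 > ⋯ > v_s > v_{s+1} = i`
of `∏_{u=0}^{s} b_{v_u}^{v_{u+1}}`; the `s` interior vertices are encoded as an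
`s`-element subset of `Ioo i n`, listed in decreasing order. -/
noncomputable def chainSum {A : Type*} [CommRing A] (b : ℕ → ℕ → A) (n i s : ℕ) : A :=
  ∑ T ∈ Finset.powersetCard s (Finset.Ioo i n),
    chainProd b (n :: ((T.sort (· ≤ ·)).reverse ++ [i]))


/-!
The element `g = ⌈i_1,j_1⌉⋯⌈i_p,j_p⌉` of `W(A_n) = S_{n+1}` satisfies `g j_t = i_t - 1` and
`x ≤ g x` for every other `x`, so the `j_t` are exactly the descents of `g` and the `i_t` are
read off from `g`: distinct normal-form data give distinct elements, and `|A_n^j|` counts data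
whose last pair is `(i, j)`. Removing the last pair shows that the number `N(i, j)` of data
ending in `(i', j)` with `i < i'` satisfies
`N(i, j) = N(i+1, j) + 1 + ∑_{j < j' ≤ n} N(i+1, j')`, which is solved by the ballot numbers
`N(i, j) = C(a+c+1, c) - C(a+c+1, c+1)` with `a = n - j`, `c = n - i`. For `i = 0` this is the
Catalan triangle entry `j/(n+1) · C(2n-j+1, n)`.
-/

def ballot (a c : ℕ) : ℤ := ((a + c + 1).choose c : ℤ) - (a + c + 1).choose (c + 1)

theorem ballot_zero_left (c : ℕ) : ballot 0 c = c := by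
  simp [ballot, add_comm 0 c, Nat.choose_succ_self_right]

theorem ballot_self (a : ℕ) : ballot a a = 0 := by
  simp [ballot, ← two_mul, Nat.choose_symm_half]

theorem ballot_succ_succ (a c : ℕ) :
    ballot (a + 1) (c + 1) = ballot (a + 1) c + ballot a (c + 1) := by
  simp only [ballot, show a + 1 + (c + 1) + 1 = (a + c + 2) + 1 by ring,
    show a + 1 + c + 1 = a + c + 2 by ring, show a + (c + 1) + 1 = a + c + 2 by ring,
    Nat.choose_succ_succ, Nat.cast_add]
  ring

theorem ballot_succ_right (a c : ℕ) :
    ballot a (c + 1) = ballot a c + 1 + ∑ a' ∈ range a, ballot a' c := by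
  induction a with
  | zero => simp [ballot_zero_left]
  | succ a ih => rw [ballot_succ_succ, ih, sum_range_succ]; ring

theorem succ_mul_choose_sub_choose_succ (m k : ℕ) :
    ((k : ℤ) + 1) * (m.choose k - m.choose (k + 1)) = (2 * k + 1 - m) * m.choose k := by
  rcases le_or_gt k m with hkm | hmk
  · have h := Nat.choose_succ_right_eq m k
    zify [hkm] at h
    linear_combination -h
  · simp [Nat.choose_eq_zero_of_lt hmk, Nat.choose_eq_zero_of_lt (hmk.trans (Nat.lt_succ_self k))]

theorem pairwise_of_isChain {L : List (ℕ × ℕ)}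
    (h : L.IsChain fun a b => b.1 < a.1 ∧ b.2 < a.2) :
    L.Pairwise fun a b => b.1 < a.1 ∧ b.2 < a.2 :=
  (@List.isChain_iff_pairwise _ _ L ⟨fun h₁ h₂ => ⟨h₂.1.trans h₁.1, h₂.2.trans h₁.2⟩⟩).mp h

theorem nfData_iff {n : ℕ} {L : List (ℕ × ℕ)} :
    NFData n L ↔ L.IsChain (fun a b => b.1 < a.1 ∧ b.2 < a.2) ∧
      ∀ p ∈ L, 1 ≤ p.1 ∧ p.1 ≤ p.2 ∧ p.2 ≤ n := by
  refine ⟨fun h => h.2, fun ⟨hc, hb⟩ => ⟨?_, hc, hb⟩⟩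
  have hnd : (L.map Prod.snd).Nodup := (pairwise_of_isChain hc).map _ fun _ _ h => h.2.ne'
  calc L.length = (L.map Prod.snd).toFinset.card := by
        rw [List.toFinset_card_of_nodup hnd, List.length_map]
    _ ≤ (Icc 1 n).card := card_le_card fun x hx => by
        obtain ⟨p, hp, rfl⟩ := List.mem_map.mp (List.mem_toFinset.mp hx)
        have := hb p hp
        exact mem_Icc.mpr ⟨by omega, this.2.2⟩
    _ = n := by simp

theorem nfData_singleton {n : ℕ} {p : ℕ × ℕ} :
    NFData n [p] ↔ 1 ≤ p.1 ∧ p.1 ≤ p.2 ∧ p.2 ≤ n := by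
  simp [nfData_iff]

theorem nfData_append_pair {n : ℕ} {L : List (ℕ × ℕ)} {p q : ℕ × ℕ} :
    NFData n (L ++ [p, q]) ↔
      NFData n (L ++ [p]) ∧ q.1 < p.1 ∧ q.2 < p.2 ∧ 1 ≤ q.1 ∧ q.1 ≤ q.2 := by
  simp only [nfData_iff, List.isChain_append_cons_cons, List.isChain_singleton, and_true,
    List.mem_append, List.mem_cons, List.not_mem_nil, or_false]
  constructor
  · rintro ⟨⟨hc, hpq⟩, hb⟩
    have hq := hb q (by tauto)
    exact ⟨⟨hc, fun r hr => hb r (by tauto)⟩, hpq.1, hpq.2, hq.1, hq.2.1⟩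
  · rintro ⟨⟨hc, hb⟩, h1, h2, h3, h4⟩
    refine ⟨⟨hc, h1, h2⟩, fun r hr => ?_⟩
    rcases hr with hr | rfl | rfl
    · exact hb r (Or.inl hr)
    · exact hb r (Or.inr rfl)
    · have := hb p (Or.inr rfl); omega

def nfEnding (n i j : ℕ) : Finset (List (ℕ × ℕ)) :=
  if i < j ∧ j ≤ n then
    nfEnding n (i + 1) j ∪ insert [(i + 1, j)]
      ((Ioc j n).biUnion fun j' => (nfEnding n (i + 1) j').image (· ++ [(i + 1, j)]))
  else ∅
termination_by n - i

theorem mem_nfEnding {n i j : ℕ} {L : List (ℕ × ℕ)} :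
    L ∈ nfEnding n i j ↔ NFData n L ∧ ∃ L' i', L = L' ++ [(i', j)] ∧ i < i' := by
  rw [nfEnding]
  split_ifs with hij
  · simp only [mem_union, mem_insert, mem_biUnion, mem_Ioc, mem_image]
    constructor
    · rintro (hL | rfl | ⟨j', hj', L'', hL'', rfl⟩)
      · obtain ⟨hnf, L', i', rfl, hi'⟩ := mem_nfEnding.mp hL
        exact ⟨hnf, L', i', rfl, by omega⟩
      · exact ⟨nfData_singleton.mpr ⟨by omega, by omega, hij.2⟩, [], i + 1, rfl, by omega⟩
      · obtain ⟨hnf, L', i', rfl, hi'⟩ := mem_nfEnding.mp hL''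
        refine ⟨?_, L' ++ [(i', j')], i + 1, rfl, by omega⟩
        rw [List.append_assoc, List.singleton_append, nfData_append_pair]
        exact ⟨hnf, by omega, by omega, by omega, by omega⟩
    · rintro ⟨hnf, L', i', rfl, hi'⟩
      rcases Nat.lt_or_eq_of_le hi' with hi' | rfl
      · exact Or.inl (mem_nfEnding.mpr ⟨hnf, L', i', rfl, hi'⟩)
      right
      rcases L'.eq_nil_or_concat' with rfl | ⟨L'', ⟨i'', j'⟩, rfl⟩
      · exact Or.inl rfl
      rw [List.append_assoc, List.singleton_append, nfData_append_pair] at hnf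
      obtain ⟨hnf', hi'', hj'', -, -⟩ := hnf
      have hj'n := ((nfData_iff.mp hnf').2 (i'', j') (by simp)).2.2
      exact Or.inr ⟨j', ⟨hj'', hj'n⟩, _,
        mem_nfEnding.mpr ⟨hnf', L'', i'', rfl, hi''⟩, rfl⟩
  · simp only [notMem_empty, false_iff]
    rintro ⟨hnf, L', i', rfl, hi'⟩
    have := (nfData_iff.mp hnf).2 (i', j) (by simp)
    omega
termination_by n - i

theorem card_nfEnding_of_lt {n i j : ℕ} (hij : i < j) (hjn : j ≤ n) :
    (nfEnding n i j).card = (nfEnding n (i + 1) j).card + 1 +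
      ∑ j' ∈ Ioc j n, (nfEnding n (i + 1) j').card := by
  have last {L : List (ℕ × ℕ)} {i' j' : ℕ} (h : L ∈ nfEnding n i' j') :
      ∃ i'', i' < i'' ∧ L.getLast? = some (i'', j') := by
    obtain ⟨-, L', i'', rfl, hi''⟩ := mem_nfEnding.mp h
    exact ⟨i'', hi'', by simp⟩
  rw [nfEnding, if_pos ⟨hij, hjn⟩, card_union_of_disjoint, card_insert_of_notMem,
    card_biUnion]
  · simp only [card_image_of_injective _ (List.append_left_injective [(i + 1, j)])]
    ring
  · intro j₁ _ j₂ _ hne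
    simp only [Function.onFun, disjoint_left, mem_image]
    rintro _ ⟨L, hL₁, rfl⟩ ⟨L', hL₂, hL⟩
    obtain rfl := List.append_left_injective _ hL
    obtain ⟨_, -, h₁⟩ := last hL₁
    obtain ⟨_, -, h₂⟩ := last hL₂
    simp_all
  · simp only [mem_biUnion, mem_image, not_exists, not_and]
    intro j' _ L hL hL'
    obtain ⟨_, -, h⟩ := last hL
    have := congrArg List.length hL'
    simp_all
  · simp only [disjoint_left, mem_insert, mem_biUnion, mem_image]
    intro L hL
    obtain ⟨i', hi', h⟩ := last hL
    rintro (rfl | ⟨j', -, L', -, rfl⟩) <;> simp at h <;> omega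

theorem card_nfEnding {n i j : ℕ} (hij : i ≤ j) (hjn : j ≤ n) :
    ((nfEnding n i j).card : ℤ) = ballot (n - j) (n - i) := by
  rcases hij.eq_or_lt with rfl | hij
  · rw [nfEnding, if_neg (by omega), card_empty, Nat.cast_zero, ballot_self]
  have reflect : ∑ j' ∈ Ioc j n, ballot (n - j') (n - (i + 1)) =
      ∑ a ∈ range (n - j), ballot a (n - (i + 1)) :=
    sum_nbij' (n - ·) (n - ·) (by intros; simp_all; omega) (by intros; simp_all; omega)
      (by intros; simp_all; omega) (by intros; simp_all; omega) (by intros; rfl)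
  rw [card_nfEnding_of_lt hij hjn, Nat.cast_add, Nat.cast_add, Nat.cast_sum,
    card_nfEnding (by omega) hjn, sum_congr rfl fun j' hj' => card_nfEnding (by simp at hj'; omega)
      (mem_Ioc.mp hj').2, reflect, show n - i = n - (i + 1) + 1 by omega, ballot_succ_right]
  push_cast; ring
termination_by n - i

open Fin.NatCast

theorem wprod_append (n : ℕ) (w w' : List ℕ) : wprod n (w ++ w') = wprod n w * wprod n w' := by
  simp [wprod]

theorem nfWord_cons (p : ℕ × ℕ) (L : List (ℕ × ℕ)) :
    nfWord (p :: L) = List.Ico p.1 (p.2 + 1) ++ nfWord L := by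
  simp [nfWord]

theorem val_sig_apply {n i : ℕ} (hi : 1 ≤ i) (hin : i ≤ n) (x : Fin (n + 1)) :
    (sig n i x : ℕ) = if (x : ℕ) = i - 1 then i else if (x : ℕ) = i then i - 1 else x := by
  have h₁ : (((i - 1 : ℕ) : Fin (n + 1)) : ℕ) = i - 1 := Fin.val_cast_of_lt (by omega)
  have h₂ : ((i : Fin (n + 1)) : ℕ) = i := Fin.val_cast_of_lt (by omega)
  simp only [sig, Equiv.swap_apply_def, Fin.ext_iff, h₁, h₂]
  split_ifs <;> simp_all

theorem val_wprod_Ico_apply {n i j : ℕ} (hi : 1 ≤ i) (hij : i ≤ j) (hjn : j ≤ n)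
    (x : Fin (n + 1)) :
    (wprod n (List.Ico i (j + 1)) x : ℕ) =
      if (x : ℕ) = j then i - 1 else if i - 1 ≤ (x : ℕ) ∧ (x : ℕ) < j then x + 1 else x := by
  induction j, hij using Nat.le_induction generalizing x with
  | base =>
    simp only [List.Ico.succ_top le_rfl, List.Ico.self_empty, List.nil_append, wprod,
      List.map_singleton, List.prod_singleton, val_sig_apply hi hjn]
    split_ifs <;> omega
  | succ j hij ih =>
    rw [List.Ico.succ_top (by omega), wprod_append, Equiv.Perm.mul_apply, ih (by omega)]
    simp only [wprod, List.map_singleton, List.prod_singleton, val_sig_apply (by omega) hjn]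
    split_ifs <;> omega

theorem wprod_apply_eq_self {n : ℕ} {w : List ℕ} {x : Fin (n + 1)} (h : ∀ k ∈ w, k < x) :
    wprod n w x = x := by
  induction w with
  | nil => rfl
  | cons k w ih =>
    have hk := h k List.mem_cons_self
    rw [wprod, List.map_cons, List.prod_cons, Equiv.Perm.mul_apply, ← wprod,
      ih fun k' hk' => h k' (List.mem_cons_of_mem _ hk')]
    refine Equiv.swap_apply_of_ne_of_ne ?_ ?_ <;>
      · rw [Ne, Fin.ext_iff, Fin.val_natCast]
        have := Nat.mod_le (k - 1) (n + 1)
        have := Nat.mod_le k (n + 1)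
        omega

theorem wprod_nfWord_apply_eq_self {n : ℕ} {L : List (ℕ × ℕ)} {x : Fin (n + 1)}
    (h : ∀ p ∈ L, p.2 < x) : wprod n (nfWord L) x = x :=
  wprod_apply_eq_self fun k hk => by
    obtain ⟨p, hp, hk⟩ : ∃ p ∈ L, p.1 ≤ k ∧ k < p.2 + 1 := by simpa [nfWord] using hk
    have := h p hp
    omega

section NormalForm

variable {n : ℕ} {L : List (ℕ × ℕ)}

theorem val_wprod_nfWord_apply_snd (hL : L.Pairwise fun a b => b.1 < a.1 ∧ b.2 < a.2)
    (hb : ∀ p ∈ L, 1 ≤ p.1 ∧ p.1 ≤ p.2 ∧ p.2 ≤ n) {p : ℕ × ℕ} (hp : p ∈ L) :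
    (wprod n (nfWord L) p.2 : ℕ) = p.1 - 1 := by
  induction L with
  | nil => simp at hp
  | cons q L ih =>
    obtain ⟨hq, hL⟩ := List.pairwise_cons.mp hL
    have hbq := hb q List.mem_cons_self
    have hqn : ((q.2 : Fin (n + 1)) : ℕ) = q.2 := Fin.val_cast_of_lt (by omega)
    rw [nfWord_cons, wprod_append, Equiv.Perm.mul_apply, val_wprod_Ico_apply hbq.1 hbq.2.1 hbq.2.2]
    rcases List.mem_cons.mp hp with rfl | hp
    · rw [wprod_nfWord_apply_eq_self fun r hr => by rw [hqn]; exact (hq r hr).2, hqn, if_pos rfl]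
    · have := hq p hp
      have := hb p (List.mem_cons_of_mem _ hp)
      rw [ih hL (fun r hr => hb r (List.mem_cons_of_mem _ hr)) hp, if_neg (by omega),
        if_neg (by omega)]

theorem le_val_wprod_nfWord_apply (hL : L.Pairwise fun a b => b.1 < a.1 ∧ b.2 < a.2)
    (hb : ∀ p ∈ L, 1 ≤ p.1 ∧ p.1 ≤ p.2 ∧ p.2 ≤ n) {x : Fin (n + 1)}
    (hx : (x : ℕ) ∉ L.map Prod.snd) : (x : ℕ) ≤ wprod n (nfWord L) x := by
  induction L with
  | nil => simp [nfWord, wprod]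
  | cons q L ih =>
    obtain ⟨hq, hL⟩ := List.pairwise_cons.mp hL
    have hbq := hb q List.mem_cons_self
    simp only [List.map_cons, List.mem_cons, not_or] at hx
    have hqn : ((q.2 : Fin (n + 1)) : ℕ) = q.2 := Fin.val_cast_of_lt (by omega)
    have hfix : wprod n (nfWord L) q.2 = q.2 :=
      wprod_nfWord_apply_eq_self fun r hr => by rw [hqn]; exact (hq r hr).2
    have hne : (wprod n (nfWord L) x : ℕ) ≠ q.2 := fun h => by
      have : wprod n (nfWord L) x = wprod n (nfWord L) q.2 := by
        rw [hfix]; exact Fin.ext (by rw [h, hqn])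
      exact hx.1 (by rw [(wprod n (nfWord L)).injective this, hqn])
    have := ih hL (fun r hr => hb r (List.mem_cons_of_mem _ hr)) hx.2
    rw [nfWord_cons, wprod_append, Equiv.Perm.mul_apply, val_wprod_Ico_apply hbq.1 hbq.2.1 hbq.2.2]
    split_ifs <;> omega

theorem mem_map_snd_iff_val_wprod_nfWord_lt (hL : L.Pairwise fun a b => b.1 < a.1 ∧ b.2 < a.2)
    (hb : ∀ p ∈ L, 1 ≤ p.1 ∧ p.1 ≤ p.2 ∧ p.2 ≤ n) (x : ℕ) :
    x ∈ L.map Prod.snd ↔ x ≤ n ∧ (wprod n (nfWord L) x : ℕ) < x := by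
  constructor
  · rintro hx
    obtain ⟨p, hp, rfl⟩ := List.mem_map.mp hx
    have := hb p hp
    rw [val_wprod_nfWord_apply_snd hL hb hp]
    omega
  · rintro ⟨hxn, hlt⟩
    by_contra hx
    have hxv : ((x : Fin (n + 1)) : ℕ) = x := Fin.val_cast_of_lt (by omega)
    have := le_val_wprod_nfWord_apply hL hb (x := x) (by rwa [hxv])
    omega

theorem map_snd_map_val_wprod_nfWord (hL : L.Pairwise fun a b => b.1 < a.1 ∧ b.2 < a.2)
    (hb : ∀ p ∈ L, 1 ≤ p.1 ∧ p.1 ≤ p.2 ∧ p.2 ≤ n) :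
    (L.map Prod.snd).map (fun x : ℕ => ((wprod n (nfWord L) x : ℕ) + 1, x)) = L := by
  rw [List.map_map]
  refine (List.map_congr_left fun p hp => ?_).trans L.map_id
  have := hb p hp
  simp only [Function.comp_apply, val_wprod_nfWord_apply_snd hL hb hp, id]
  exact Prod.ext (by dsimp only; omega) rfl

end NormalForm

theorem wprod_nfWord_injOn (n : ℕ) :
    Set.InjOn (fun L => wprod n (nfWord L)) {L | NFData n L} := by
  intro L hL M hM h
  simp only at h
  have hLp := pairwise_of_isChain hL.2.1
  have hMp := pairwise_of_isChain hM.2.1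
  have hsnd : L.map Prod.snd = M.map Prod.snd := by
    have hL' := hLp.map (S := fun a b : ℕ => b < a) Prod.snd fun _ _ h => h.2
    have hM' := hMp.map (S := fun a b : ℕ => b < a) Prod.snd fun _ _ h => h.2
    refine List.Perm.eq_of_pairwise' hL' hM' ?_
    rw [List.perm_ext_iff_of_nodup (hL'.imp ne_of_gt) (hM'.imp ne_of_gt)]
    intro x
    rw [mem_map_snd_iff_val_wprod_nfWord_lt hLp hL.2.2,
      mem_map_snd_iff_val_wprod_nfWord_lt hMp hM.2.2, h]
  rw [← map_snd_map_val_wprod_nfWord hLp hL.2.2, ← map_snd_map_val_wprod_nfWord hMp hM.2.2,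
    hsnd, h]

theorem mem_nfEnding_zero {n j : ℕ} {L : List (ℕ × ℕ)} :
    L ∈ nfEnding n 0 j ↔ NFData n L ∧ ∃ h : L ≠ [], (L.getLast h).2 = j := by
  rw [mem_nfEnding]
  refine and_congr_right fun hL => ⟨?_, fun ⟨hne, hj⟩ => ?_⟩
  · rintro ⟨L', i', rfl, -⟩
    exact ⟨by simp, by simp⟩
  · refine ⟨L.dropLast, (L.getLast hne).1, ?_, ((nfData_iff.mp hL).2 _ (L.getLast_mem hne)).1⟩
    rw [← hj]
    exact (List.dropLast_append_getLast hne).symm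

theorem succ_mul_ballot_sub_eq {n j : ℕ} (hjn : j ≤ n) :
    ((n : ℤ) + 1) * ballot (n - j) n = j * (2 * n - j + 1).choose n := by
  rw [ballot, show n - j + n + 1 = 2 * n - j + 1 by omega, succ_mul_choose_sub_choose_succ]
  push_cast [show j ≤ 2 * n by omega]
  ring

theorem stmt3_general (n j : ℕ) (h2 : j ≤ n) :
    Nat.card (Anj n j) = j * Nat.choose (2*n - j + 1) n / (n+1) := by
  have hAnj : Anj n j = (fun L => wprod n (nfWord L)) '' ↑(nfEnding n 0 j) := by
    ext g
    simp only [Anj, Set.mem_image, mem_coe, mem_nfEnding_zero]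
    exact exists_congr fun L => by tauto
  have hcard : Nat.card (Anj n j) = (nfEnding n 0 j).card := by
    rw [hAnj, Nat.card_coe_set_eq, ((wprod_nfWord_injOn n).mono fun L hL =>
      (mem_nfEnding_zero.mp hL).1).ncard_image, Set.ncard_coe_finset]
  have hmul : (n + 1) * Nat.card (Anj n j) = j * (2 * n - j + 1).choose n := by
    have := card_nfEnding (n := n) (Nat.zero_le j) h2
    rw [Nat.sub_zero] at this
    rw [hcard]
    exact_mod_cast (congrArg (((n : ℤ) + 1) * ·) this).trans (succ_mul_ballot_sub_eq h2)
  exact (Nat.div_eq_of_eq_mul_left n.succ_pos (by rw [← hmul, mul_comm])).symm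

theorem stmt3 (n j : ℕ) (h1 : 1 ≤ j) (h2 : j ≤ n) :
    Nat.card (Anj n j) = j * Nat.choose (2*n - j + 1) n / (n+1) :=
  stmt3_general n j h2
end

section
/- For n ≥ 1, the Catalan numbers satisfy the identity C_n = n − Σ_{k=2}^{n} (−1)^{k-1} binomial(n−k, k−1) C_{n-k+1}. -/
/-! Substituting `y(1 - y)` into the Catalan generating function `C(x) = 1 + x C(x)²` gives a
power series satisfying the same quadratic equation as `1 / (1 - y)`. Because `y(1 - y)` has no
constant term this equation has only one power-series solution, so `C(y(1 - y)) = 1 / (1 - y)`.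
Squaring, `∑ₘ C_{m+1} yᵐ (1 - y)ᵐ = 1 / (1 - y)²`, and the coefficient of `y^(n-1)` on both
sides is the identity, after the change of index `m = n - k`. -/

open Polynomial Finset

namespace PowerSeries

variable {R : Type*} [CommRing R]

theorem coeff_one_sub_X_pow (d k : ℕ) :
    coeff k ((1 - X : R⟦X⟧) ^ d) = (-1) ^ k * d.choose k := by
  have h : (1 - X : R⟦X⟧) = rescale (-1) ((1 + Polynomial.X : R[X]) : R⟦X⟧) := by
    simp [rescale_X, sub_eq_add_neg]
  rw [h, ← map_pow, coeff_rescale, ← Polynomial.coe_pow, Polynomial.coeff_coe,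
    Polynomial.coeff_one_add_X_pow]

theorem coeff_X_mul_one_sub_X_pow (d n : ℕ) :
    coeff n ((X * (1 - X) : R⟦X⟧) ^ d) =
      if d ≤ n then (-1 : R) ^ (n - d) * d.choose (n - d) else 0 := by
  rw [mul_pow, coeff_X_pow_mul', coeff_one_sub_X_pow]

theorem eq_of_sq_mul_add_one_eq {y f g : R⟦X⟧} (hy : constantCoeff y = 0)
    (hf : f ^ 2 * y + 1 = f) (hg : g ^ 2 * y + 1 = g) : f = g := by
  have hfactor : (f - g) * (1 - (f + g) * y) = 0 := by linear_combination hg - hf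
  have hunit : IsUnit (1 - (f + g) * y) := by
    simp [isUnit_iff_constantCoeff, hy]
  exact sub_eq_zero.mp (hunit.mul_left_eq_zero.mp hfactor)

theorem mk_one_sq_mul_X_mul_one_sub_X_add_one :
    (mk 1 : R⟦X⟧) ^ 2 * (X * (1 - X)) + 1 = mk 1 := by
  linear_combination (mk 1 * X - 1 : R⟦X⟧) * mk_one_mul_one_sub_eq_one R

-- `catalanSeries` lives over `ℕ`, but substitution needs a commutative ring of coefficients.
theorem map_catalanSeries_sq_mul_X_add_one :
    (catalanSeries.map (Nat.castRingHom R)) ^ 2 * X + 1 =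
      catalanSeries.map (Nat.castRingHom R) := by
  simpa using congrArg (map (Nat.castRingHom R)) catalanSeries_sq_mul_X_add_one

theorem coeff_map_catalanSeries_sq (n : ℕ) :
    coeff n ((catalanSeries.map (Nat.castRingHom R)) ^ 2) = (catalan (n + 1) : R) := by
  simpa [-map_pow] using
    congrArg (coeff (n + 1)) (map_catalanSeries_sq_mul_X_add_one (R := R))

theorem hasSubst_X_mul_one_sub_X : HasSubst (X * (1 - X) : R⟦X⟧) :=
  HasSubst.of_constantCoeff_zero' (by simp)

theorem map_catalanSeries_subst_X_mul_one_sub_X :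
    (catalanSeries.map (Nat.castRingHom R)).subst (X * (1 - X) : R⟦X⟧) = mk 1 := by
  have hY := hasSubst_X_mul_one_sub_X (R := R)
  refine eq_of_sq_mul_add_one_eq (y := X * (1 - X)) (by simp) ?_
    mk_one_sq_mul_X_mul_one_sub_X_add_one
  have h := congrArg (substAlgHom (R := R) hY) map_catalanSeries_sq_mul_X_add_one
  rwa [map_add, map_mul, map_pow, map_one, coe_substAlgHom, subst_X hY] at h

end PowerSeries

section CatalanIdentity

open PowerSeries

variable {R : Type*} [CommRing R]

theorem sum_neg_one_pow_mul_choose_mul_catalan_succ (n : ℕ) :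
    ∑ m ∈ range (n + 1), (-1 : R) ^ (n - m) * m.choose (n - m) * catalan (m + 1) = n + 1 := by
  set C := catalanSeries.map (Nat.castRingHom R)
  set Y : R⟦X⟧ := PowerSeries.X * (1 - PowerSeries.X)
  have hY : HasSubst Y := hasSubst_X_mul_one_sub_X
  have hsupp :
      (Function.support fun m => coeff m (C ^ 2) • coeff n (Y ^ m)) ⊆ range (n + 1) := by
    refine Function.support_subset_iff'.mpr fun m hm => ?_
    rw [mem_coe, mem_range, not_lt] at hm
    simp only [Y, coeff_X_mul_one_sub_X_pow, if_neg (show ¬m ≤ n by omega), smul_zero]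
  calc ∑ m ∈ range (n + 1), (-1 : R) ^ (n - m) * m.choose (n - m) * catalan (m + 1)
      = ∑ m ∈ range (n + 1), coeff m (C ^ 2) • coeff n (Y ^ m) := by
        refine sum_congr rfl fun m hm => ?_
        rw [coeff_map_catalanSeries_sq, coeff_X_mul_one_sub_X_pow,
          if_pos (Nat.lt_succ_iff.mp (mem_range.mp hm)), smul_eq_mul]
        ring
    _ = coeff n ((C ^ 2).subst Y) := by
        rw [coeff_subst' hY, finsum_eq_sum_of_support_subset _ hsupp]
    _ = coeff n ((PowerSeries.mk 1 : R⟦X⟧) ^ (1 + 1)) := by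
        rw [subst_pow hY, map_catalanSeries_subst_X_mul_one_sub_X]
    _ = n + 1 := by
        rw [mk_one_pow_eq_mk_choose_add, coeff_mk, Nat.choose_one_right]
        push_cast
        ring

theorem sum_Icc_neg_one_pow_mul_choose_mul_catalan (n : ℕ) :
    ∑ k ∈ Icc 1 n, (-1 : R) ^ (k - 1) * (n - k).choose (k - 1) * catalan (n - k + 1) = n := by
  cases n with
  | zero => simp
  | succ N =>
    rw [Nat.cast_succ, ← sum_neg_one_pow_mul_choose_mul_catalan_succ]
    refine sum_nbij' (fun k => N + 1 - k) (fun m => N + 1 - m) ?_ ?_ ?_ ?_ fun k hk => ?_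
    iterate 4 intro k hk; simp only [mem_Icc, mem_range] at hk ⊢; omega
    rw [show N - (N + 1 - k) = k - 1 by grind]

end CatalanIdentity

theorem stmt11 (n : ℕ) (hn : 1 ≤ n) :
    (catalan n : ℤ) = n - ∑ k ∈ Finset.Icc 2 n,
      (-1)^(k-1) * (Nat.choose (n-k) (k-1) : ℤ) * (catalan (n-k+1) : ℤ) := by
  have h := sum_Icc_neg_one_pow_mul_choose_mul_catalan (R := ℤ) n
  rw [← add_sum_Ioc_eq_sum_Icc hn, ← Icc_add_one_left_eq_Ioc, Nat.sub_self, pow_zero,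
    Nat.choose_zero_right, Nat.sub_add_cancel hn] at h
  linear_combination h
end

section
/- The polynomials b_j^k := B_j^{j-k+1} satisfy b_j^{j-1} = 1 − q^2 − q^3 − ··· − q^j for all j ≥ 2. -/
open Polynomial Finset

namespace Bfam

variable {B : ℕ → ℕ → Polynomial ℤ}

theorem apply_two_succ (hB : Bfam B) {j : ℕ} (hj : 2 ≤ j) :
    B (j + 1) 2 = B j 2 - X ^ (j + 1) := by
  obtain ⟨hB1, -, hrec⟩ := hB
  have h := hrec (j + 1) 2 le_rfl (by omega)
  rw [Nat.add_sub_cancel, show j + 1 - 2 = j - 1 by omega, hB1 j (by omega),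
    hB1 (j - 1) (by omega)] at h
  rw [h]
  ring

theorem apply_two (hB : Bfam B) {j : ℕ} (hj : 2 ≤ j) :
    B j 2 = 1 - ∑ t ∈ Icc 2 j, X ^ t := by
  induction j, hj using Nat.le_induction with
  | base => simp [hB.2.1 2 le_rfl]
  | succ j hj ih => rw [hB.apply_two_succ hj, ih, sum_Icc_succ_top (by omega)]; ring

end Bfam

theorem stmt12 (B : ℕ → ℕ → Polynomial ℤ) (hB : Bfam B) (j : ℕ) (hj : 2 ≤ j) :
    B j (j - (j-1) + 1) = 1 - ∑ t ∈ Finset.Icc 2 j, X ^ t := by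
  rw [show j - (j - 1) + 1 = 2 by omega]
  exact hB.apply_two hj
end

section
/- Let ψ(k) = q^2 + ··· + q^{k+1}, let Π(u,v) = Π_{t=u}^{v} (1−q^t) (empty product 1 if u > v), and define ΣΠ(a,b)[l_1,...,l_u] = Σ over all (i_1,...,i_u) with a ≤ i_1, i_t + l_t ≤ i_{t+1}, i_u + l_u − 1 ≤ b, of the product Π(a,b) with, for each t, the consecutive factors (1−q^{i_t})···(1−q^{i_t+l_t−1}) replaced by −q^{i_t} (value 0 if the index set is empty). Then the polynomials b_j^k satisfy, for 1 ≤ k ≤ j−1: b_j^k = Σ_{t=1}^{k} (1 − ψ(t)) b(j,k,t), where b(j,k,k) = Π(k+2, j) and, for 1 ≤ t < k, b(j,k,t) = Σ_{u=1}^{min(j−k−1, k−t)} Σ_{d_1+···+d_u = k−t, d_i ≥ 1} ΣΠ(t+2, j)[d_1+1,...,d_u+1]. -/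
/-!
Write `b(j,k,t) = S(t+2, j, k-t)`, where `S(a,j,m)` sums `ΣΠ(a,j)[d_1+1, …, d_u+1]` over all
compositions `d` of `m`; the compositions with `u > j-k-1` contribute nothing. The top factor
`1 - q^j` of `Π(a,j)` either survives or closes the last block, which gives
`S(a,j,m) = (1 - q^j) S(a,j-1,m) - Σ_d q^{j-d-1} S(a,j-d-2,m-1-d)`; comparing this with the same
identity at `(j-1, m-1)` telescopes it into the recursion of `b_j^k`. So the right-hand side obeys
the defining recursion and boundary values of `b_j^k`, except for the summand `t = k` when
`k = j - 1`, whose discrepancy is absorbed by `ψ(k) - ψ(k-1) = q^{k+1}`.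
-/

open Polynomial Finset

lemma PiPoly_of_lt {a j : ℕ} (h : j < a) : PiPoly a j = 1 := by
  rw [PiPoly, Icc_eq_empty (by omega), prod_empty]

lemma PiPoly_eq_mul_PiPoly_pred {a j : ℕ} (ha : 1 ≤ a) (h : a ≤ j) :
    PiPoly a j = (1 - X ^ j) * PiPoly a (j - 1) := by
  obtain ⟨i, rfl⟩ : ∃ i, j = i + 1 := ⟨j - 1, by omega⟩
  rw [PiPoly, PiPoly, Nat.add_sub_cancel, prod_Icc_succ_top (by omega), mul_comm]

lemma PiPoly_eq_mul_PiPoly_succ {a j : ℕ} (h : a ≤ j) :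
    PiPoly a j = (1 - X ^ a) * PiPoly (a + 1) j := by
  rw [PiPoly, PiPoly, Icc_add_one_left_eq_Ioc, mul_prod_Ioc_eq_prod_Icc (f := fun t => 1 - X ^ t) h]

lemma SigmaPi_eq_zero {a j : ℕ} {ls : List ℕ} (ha : 1 ≤ a) (hls : ls ≠ [])
    (h : j + 1 < a + ls.sum) : SigmaPi a j ls = 0 := by
  obtain ⟨l, ls, rfl⟩ := List.exists_cons_of_ne_nil hls
  rw [SigmaPi, Icc_eq_empty (by simp only [List.sum_cons] at h; omega), sum_empty]

/-- Splitting off the top factor `1 - q^j` of `Π(a, j)`: either it survives, or it is the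
last factor of the block that the last entry `l` replaces by a monomial. -/
lemma SigmaPi_append_singleton_of_sum_le {l : ℕ} (hl : 1 ≤ l) :
    ∀ (ls : List ℕ) {a j : ℕ}, 1 ≤ a → a + (ls.sum + l) ≤ j + 1 →
      SigmaPi a j (ls ++ [l]) =
        (1 - X ^ j) * SigmaPi a (j - 1) (ls ++ [l]) - X ^ (j + 1 - l) * SigmaPi a (j - l) ls
  | [], a, j, ha, h => by
    simp only [List.sum_nil, zero_add] at h
    obtain ⟨r, rfl⟩ : ∃ r, j = r + l := ⟨j - l, by omega⟩
    simp only [List.nil_append, SigmaPi, List.sum_nil, add_zero]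
    rw [show r + l + 1 - l = r + 1 by omega, show r + l - 1 + 1 - l = r by omega,
      Nat.add_sub_cancel, sum_Icc_succ_top (by omega), mul_sum, Nat.add_sub_cancel,
      PiPoly_of_lt (show r + l < r + 1 + l by omega)]
    have hterm : ∀ i ∈ Icc a r, PiPoly a (i - 1) * -X ^ i * PiPoly (i + l) (r + l) =
        (1 - X ^ (r + l)) * (PiPoly a (i - 1) * -X ^ i * PiPoly (i + l) (r + l - 1)) := by
      intro i hi
      rw [mem_Icc] at hi
      rw [PiPoly_eq_mul_PiPoly_pred (a := i + l) (by omega) (by omega)]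
      ring
    rw [sum_congr rfl hterm]
    ring
  | x :: ls, a, j, ha, h => by
    simp only [List.sum_cons] at h
    have hlj : l ≤ j := by omega
    simp only [List.cons_append, SigmaPi, List.sum_append, List.sum_cons, List.sum_nil, add_zero]
    set S := x + (ls.sum + l) with hS
    rw [show j - 1 + 1 - S = j - S by omega, show j - l + 1 - (x + ls.sum) = j + 1 - S by omega]
    have hterm : ∀ i ∈ Icc a (j + 1 - S),
        PiPoly a (i - 1) * -X ^ i * SigmaPi (i + x) j (ls ++ [l]) =
        (1 - X ^ j) * (PiPoly a (i - 1) * -X ^ i * SigmaPi (i + x) (j - 1) (ls ++ [l])) -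
          X ^ (j + 1 - l) * (PiPoly a (i - 1) * -X ^ i * SigmaPi (i + x) (j - l) ls) := by
      intro i hi
      rw [mem_Icc] at hi
      rw [SigmaPi_append_singleton_of_sum_le hl ls (by omega) (by omega)]
      ring
    have htop : SigmaPi (j - S + 1 + x) (j - 1) (ls ++ [l]) = 0 :=
      SigmaPi_eq_zero (by omega) (by simp) (by simp; omega)
    rw [sum_congr rfl hterm, sum_sub_distrib, ← mul_sum, ← mul_sum,
      show j + 1 - S = j - S + 1 by omega, sum_Icc_succ_top (by omega), htop, mul_zero, add_zero]

lemma SigmaPi_append_singleton {a j l : ℕ} (ls : List ℕ) (ha : 1 ≤ a) (hl : 1 ≤ l)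
    (h : a + l ≤ j + 1) :
    SigmaPi a j (ls ++ [l]) =
      (1 - X ^ j) * SigmaPi a (j - 1) (ls ++ [l]) - X ^ (j + 1 - l) * SigmaPi a (j - l) ls := by
  by_cases hsum : a + (ls.sum + l) ≤ j + 1
  · exact SigmaPi_append_singleton_of_sum_le hl ls ha hsum
  have hls : ls ≠ [] := by rintro rfl; simp at hsum; omega
  have hsum' : (ls ++ [l]).sum = ls.sum + l := by simp
  rw [SigmaPi_eq_zero ha (by simp) (by omega), SigmaPi_eq_zero ha (by simp) (by omega),
    SigmaPi_eq_zero ha hls (by omega)]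
  ring

lemma List.sum_map_add_one (l : List ℕ) : (l.map (· + 1)).sum = l.sum + l.length := by
  simp

namespace Composition

lemma sum_blocks_eq_sum_image {M : Type*} [AddCommMonoid M] (m : ℕ) (F : List ℕ → M) :
    ∑ c : Composition m, F c.blocks = ∑ l ∈ univ.image (blocks (n := m)), F l :=
  (sum_image fun _ _ _ _ h => Composition.ext h).symm

lemma mem_image_blocks {m : ℕ} {l : List ℕ} :
    l ∈ univ.image (blocks (n := m)) ↔ (∀ i ∈ l, 0 < i) ∧ l.sum = m := by
  simp only [mem_image, mem_univ, true_and]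
  exact ⟨by rintro ⟨c, rfl⟩; exact ⟨fun _ => c.blocks_pos, c.blocks_sum⟩,
    fun ⟨hpos, hsum⟩ => ⟨⟨l, hpos _, hsum⟩, rfl⟩⟩

lemma sum_blocks_zero {M : Type*} [AddCommMonoid M] (F : List ℕ → M) :
    ∑ c : Composition 0, F c.blocks = F [] := by
  have hnil (c : Composition 0) : c.blocks = [] :=
    List.eq_nil_iff_forall_not_mem.2 fun i hi => by
      have := List.le_sum_of_mem hi; have := c.one_le_blocks hi; simp [c.blocks_sum] at *; omega
  simp [hnil, composition_card]

lemma sum_blocks_eq_sum_last_block {M : Type*} [AddCommMonoid M] {m : ℕ} (hm : 0 < m)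
    (F : List ℕ → M) :
    ∑ c : Composition m, F c.blocks =
      ∑ d ∈ range m, ∑ c : Composition (m - 1 - d), F (c.blocks ++ [d + 1]) := by
  rw [sum_blocks_eq_sum_image, sum_congr rfl fun d _ =>
    sum_blocks_eq_sum_image (m - 1 - d) fun l => F (l ++ [d + 1]), sum_sigma']
  have hsplit : ∀ l ∈ univ.image (blocks (n := m)), ∃ l' d, l = l' ++ [d + 1] := by
    intro l hl
    rw [mem_image_blocks] at hl
    have hne : l ≠ [] := by rintro rfl; simp at hl; omega
    refine ⟨l.dropLast, l.getLast hne - 1, ?_⟩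
    rw [Nat.sub_add_cancel (hl.1 _ (List.getLast_mem hne)), List.dropLast_append_getLast]
  refine sum_nbij' (fun l => ⟨l.getLastD 0 - 1, l.dropLast⟩) (fun p => p.2 ++ [p.1 + 1])
    ?_ ?_ ?_ (fun _ _ => by simp) ?_
  · intro l hl
    obtain ⟨l', d, rfl⟩ := hsplit l hl
    simp only [mem_image_blocks, List.mem_append, List.mem_singleton, List.sum_append,
      List.sum_singleton] at hl
    simp only [mem_sigma, mem_range, mem_image_blocks, List.getLastD_concat, List.dropLast_concat,
      Nat.add_sub_cancel]
    exact ⟨by omega, fun i hi => hl.1 i (Or.inl hi), by omega⟩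
  · rintro ⟨d, l⟩ hp
    simp only [mem_sigma, mem_range, mem_image_blocks] at hp
    simp only [mem_image_blocks, List.mem_append, List.mem_singleton, List.sum_append,
      List.sum_singleton]
    exact ⟨by rintro i (hi | rfl); exacts [hp.2.1 i hi, d.succ_pos], by omega⟩
  all_goals
    intro l hl
    obtain ⟨l', d, rfl⟩ := hsplit l hl
    simp

end Composition

/-- `Σ_{d_1 + ⋯ + d_u = m} ΣΠ(a, j)[d_1 + 1, …, d_u + 1]`, summed over all lengths `u`. -/
noncomputable def SigmaPiSum (a j m : ℕ) : ℤ[X] :=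
  ∑ c : Composition m, SigmaPi a j (c.blocks.map (· + 1))

lemma SigmaPiSum_zero (a j : ℕ) : SigmaPiSum a j 0 = PiPoly a j :=
  Composition.sum_blocks_zero fun l => SigmaPi a j (l.map (· + 1))

lemma SigmaPiSum_of_lt {a j m : ℕ} (ha : 1 ≤ a) (h : j < a + m) :
    SigmaPiSum a j m = if m = 0 then 1 else 0 := by
  split_ifs with hm
  · subst hm
    rw [SigmaPiSum_zero, PiPoly_of_lt (by omega)]
  · refine sum_eq_zero fun c _ => SigmaPi_eq_zero ha ?_ ?_
    · simpa using (c.length_pos_of_pos (by omega)).ne'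
    · rw [List.sum_map_add_one, c.blocks_sum, c.blocks_length]
      have := c.length_pos_of_pos (by omega)
      omega

lemma SigmaPiSum_eq_sub_sum {a j m : ℕ} (ha : 1 ≤ a) (h : a + m ≤ j) :
    SigmaPiSum a j m = (1 - X ^ j) * SigmaPiSum a (j - 1) m -
      ∑ d ∈ range m, X ^ (j - (d + 1)) * SigmaPiSum a (j - (d + 2)) (m - 1 - d) := by
  rcases Nat.eq_zero_or_pos m with rfl | hm
  · rw [SigmaPiSum_zero, SigmaPiSum_zero, PiPoly_eq_mul_PiPoly_pred ha (by omega), range_zero,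
      sum_empty, sub_zero]
  simp only [SigmaPiSum]
  rw [Composition.sum_blocks_eq_sum_last_block hm fun l => SigmaPi a j (l.map (· + 1)),
    Composition.sum_blocks_eq_sum_last_block hm fun l => SigmaPi a (j - 1) (l.map (· + 1)),
    mul_sum, ← sum_sub_distrib]
  refine sum_congr rfl fun d hd => ?_
  rw [mul_sum, mul_sum, ← sum_sub_distrib]
  refine sum_congr rfl fun c _ => ?_
  rw [mem_range] at hd
  simp only [List.map_append, List.map_cons, List.map_nil]
  rw [SigmaPi_append_singleton _ ha (by omega) (by omega),
    show j + 1 - (d + 1 + 1) = j - (d + 1) by omega]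

lemma SigmaPiSum_rec {a j m : ℕ} (ha : 1 ≤ a) (hm : 1 ≤ m) (h : a + m ≤ j + 1) :
    SigmaPiSum a j m = SigmaPiSum a (j - 1) (m - 1) + (1 - X ^ j) * SigmaPiSum a (j - 1) m -
      SigmaPiSum a (j - 2) (m - 1) := by
  rcases h.lt_or_eq with h | h
  · obtain ⟨n, rfl⟩ : ∃ n, m = n + 1 := ⟨m - 1, by omega⟩
    have hshift : ∑ d ∈ range n, X ^ (j - (d + 1 + 1)) *
        SigmaPiSum a (j - (d + 1 + 2)) (n + 1 - 1 - (d + 1)) =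
          (1 - X ^ (j - 1)) * SigmaPiSum a (j - 2) n - SigmaPiSum a (j - 1) n := by
      rw [SigmaPiSum_eq_sub_sum (j := j - 1) ha (by omega), show j - 1 - 1 = j - 2 by omega,
        sub_sub_cancel]
      refine sum_congr rfl fun d _ => ?_
      rw [show j - (d + 1 + 1) = j - 1 - (d + 1) by omega,
        show j - (d + 1 + 2) = j - 1 - (d + 2) by omega,
        show n + 1 - 1 - (d + 1) = n - 1 - d by omega]
    rw [SigmaPiSum_eq_sub_sum ha (by omega), sum_range_succ', hshift]
    simp only [zero_add, Nat.add_sub_cancel, Nat.sub_zero]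
    ring
  · rw [SigmaPiSum_of_lt ha (by omega), SigmaPiSum_of_lt (m := m) ha (by omega),
      SigmaPiSum_of_lt (j := j - 1) ha (by omega), SigmaPiSum_of_lt (j := j - 2) ha (by omega)]
    simp [show m ≠ 0 by omega]

lemma bjkt_eq_SigmaPiSum {j k t : ℕ} (ht : t ≤ k) :
    bjkt j k t = SigmaPiSum (t + 2) j (k - t) := by
  rw [bjkt]
  split_ifs with htk
  · rw [htk, Nat.sub_self, SigmaPiSum_zero]
  have hm : 0 < k - t := by omega
  rw [SigmaPiSum, ← sum_fiberwise_of_maps_to (g := Composition.length) (t := Icc 1 (k - t))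
    fun c _ => mem_Icc.2 ⟨c.length_pos_of_pos hm, c.length_le⟩]
  refine sum_subset (Icc_subset_Icc le_rfl (min_le_right _ _)) fun u hu hu' => ?_
  refine sum_eq_zero fun c hc => SigmaPi_eq_zero (by omega) ?_ ?_
  · simpa using (c.length_pos_of_pos hm).ne'
  · rw [mem_filter] at hc
    rw [mem_Icc] at hu hu'
    rw [List.sum_map_add_one, c.blocks_sum, c.blocks_length, hc.2]
    omega

noncomputable def bClosedForm (j k : ℕ) : ℤ[X] :=
  ∑ t ∈ Icc 1 k, (1 - psi t) * SigmaPiSum (t + 2) j (k - t)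

lemma psi_succ (k : ℕ) : psi (k + 1) = psi k + X ^ (k + 2) := by
  rw [psi, psi, sum_Icc_succ_top (by omega)]

lemma bClosedForm_one {j : ℕ} (hj : 2 ≤ j) :
    bClosedForm j 1 = ∏ t ∈ Icc 2 j, (1 - X ^ t) := by
  rw [bClosedForm, Icc_self, sum_singleton, Nat.sub_self, SigmaPiSum_zero, psi, Icc_self,
    sum_singleton]
  exact (PiPoly_eq_mul_PiPoly_succ hj).symm

lemma bClosedForm_self {k : ℕ} (hk : 1 ≤ k) : bClosedForm k k = 1 - psi k := by
  rw [bClosedForm, sum_eq_single_of_mem k (mem_Icc.2 ⟨hk, le_rfl⟩)]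
  · rw [SigmaPiSum_of_lt (by omega) (by omega), if_pos (Nat.sub_self k), mul_one]
  · intro t ht htk
    rw [mem_Icc] at ht
    rw [SigmaPiSum_of_lt (by omega) (by omega), if_neg (by omega), mul_zero]

/-- The correction term vanishes unless `j = k + 1`. -/
lemma bClosedForm_rec {j k : ℕ} (hk : 1 ≤ k) (hkj : k + 1 ≤ j) :
    bClosedForm j k = bClosedForm (j - 1) (k - 1) + (1 - X ^ j) * bClosedForm (j - 1) k -
      bClosedForm (j - 2) (k - 1) +
        (1 - psi k) * (PiPoly (k + 2) j - (1 - X ^ j) * PiPoly (k + 2) (j - 1)) := by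
  obtain ⟨n, rfl⟩ : ∃ n, k = n + 1 := ⟨k - 1, by omega⟩
  have hterm : ∀ t ∈ Icc 1 n, (1 - psi t) * SigmaPiSum (t + 2) j (n + 1 - t) =
      (1 - psi t) * SigmaPiSum (t + 2) (j - 1) (n - t) +
        (1 - X ^ j) * ((1 - psi t) * SigmaPiSum (t + 2) (j - 1) (n + 1 - t)) -
          (1 - psi t) * SigmaPiSum (t + 2) (j - 2) (n - t) := by
    intro t ht
    rw [mem_Icc] at ht
    rw [SigmaPiSum_rec (by omega) (by omega) (by omega), show n + 1 - t - 1 = n - t by omega]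
    ring
  simp only [bClosedForm, Nat.add_sub_cancel]
  rw [sum_Icc_succ_top (by omega), sum_Icc_succ_top (by omega), sum_congr rfl hterm,
    sum_sub_distrib, sum_add_distrib, ← mul_sum, Nat.sub_self, SigmaPiSum_zero, SigmaPiSum_zero]
  ring

theorem eq_bClosedForm {b : ℕ → ℕ → ℤ[X]} (hb : bfam b) {j k : ℕ} (hk : 1 ≤ k)
    (hkj : k ≤ j - 1) : b j k = bClosedForm j k := by
  obtain ⟨hdiag, hone, hrec⟩ := hb
  induction j using Nat.strong_induction_on generalizing k with
  | _ j ih =>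
  rcases hk.eq_or_lt with rfl | hk
  · rw [hone j (by omega), bClosedForm_one (by omega)]
  rw [hrec j k hk (by omega), bClosedForm_rec (by omega) (by omega),
    ih (j - 1) (by omega) (by omega) (by omega)]
  rcases (show k + 2 ≤ j ∨ j = k + 1 by omega) with hkj | rfl
  · rw [ih (j - 1) (by omega) (by omega) (by omega), ih (j - 2) (by omega) (by omega) (by omega),
      PiPoly_eq_mul_PiPoly_pred (j := j) (by omega) hkj]
    ring
  · obtain ⟨n, rfl⟩ : ∃ n, k = n + 1 := ⟨k - 1, by omega⟩
    simp only [Nat.add_sub_cancel, show n + 1 + 1 - 2 = n by omega]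
    rw [hdiag _ (by omega), hdiag _ (by omega), bClosedForm_self (by omega),
      bClosedForm_self (by omega), PiPoly_of_lt (by omega), PiPoly_of_lt (by omega), psi_succ]
    ring

theorem stmt13 (b : ℕ → ℕ → Polynomial ℤ) (hb : bfam b)
    (j k : ℕ) (h1 : 1 ≤ k) (h2 : k ≤ j - 1) :
    b j k = ∑ t ∈ Finset.Icc 1 k, (1 - psi t) * bjkt j k t := by
  rw [eq_bClosedForm hb h1 h2, bClosedForm]
  exact sum_congr rfl fun t ht => by rw [bjkt_eq_SigmaPiSum (mem_Icc.1 ht).2]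
end

section
/- If l_1 + ··· + l_u = b − a + 1 (so the gaps exactly fill the interval), then ΣΠ(a,b)[l_1,...,l_u] = (−1)^u · q^{u·a + (u−1)·l_1 + (u−2)·l_2 + ··· + l_{u-1}}. -/
open Polynomial Finset

theorem PiPoly_eq_one_of_lt {u v : ℕ} (h : v < u) : PiPoly u v = 1 := by
  rw [PiPoly, Finset.Icc_eq_empty (by omega), Finset.prod_empty]

/-- When the blocks fill `[a, b]` exactly, the first block can only start at `i_1 = a`;
`1 ≤ a` keeps the empty product `PiPoly a (a - 1)` from truncating to `PiPoly 0 0 = 0`. -/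
theorem SigmaPi_cons_of_add_sum_eq {a b x : ℕ} {ls : List ℕ} (ha : 1 ≤ a)
    (h : a + x + ls.sum = b + 1) :
    SigmaPi a b (x :: ls) = -X ^ a * SigmaPi (a + x) b ls := by
  rw [SigmaPi, show b + 1 - (x + ls.sum) = a by omega, Finset.Icc_self, Finset.sum_singleton,
    PiPoly_eq_one_of_lt (by omega), one_mul]

theorem sum_range_length_cons_mul_getD (x : ℕ) (ls : List ℕ) :
    ∑ t ∈ Finset.range (ls.length + 1), (ls.length - t) * (x :: ls).getD t 0 =
      ls.length * x + ∑ t ∈ Finset.range ls.length, (ls.length - 1 - t) * ls.getD t 0 := by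
  rw [Finset.sum_range_succ', add_comm]
  congr 1
  refine Finset.sum_congr rfl fun t _ => ?_
  rw [List.getD_cons_succ, Nat.sub_add_eq, Nat.sub_right_comm]

theorem SigmaPi_of_add_sum_eq {a b : ℕ} {l : List ℕ} (ha : 1 ≤ a) (h : a + l.sum = b + 1) :
    SigmaPi a b l = (-1) ^ l.length *
      X ^ (l.length * a + ∑ t ∈ Finset.range l.length, (l.length - 1 - t) * l.getD t 0) := by
  induction l generalizing a with
  | nil =>
    obtain rfl : a = b + 1 := by simpa using h
    simp [SigmaPi, PiPoly_eq_one_of_lt]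
  | cons x ls ih =>
    rw [List.sum_cons, ← add_assoc] at h
    rw [SigmaPi_cons_of_add_sum_eq ha h, ih (by omega) h]
    simp only [List.length_cons, Nat.add_sub_cancel, sum_range_length_cons_mul_getD]
    ring

theorem stmt14_general (a b : ℕ) (l : List ℕ) (ha : 1 ≤ a) (hab : a ≤ b)
    (hsum : l.sum = b - a + 1) :
    SigmaPi a b l = (-1)^l.length *
      X ^ (l.length * a +
        ∑ t ∈ Finset.range l.length, (l.length - 1 - t) * l.getD t 0) :=
  SigmaPi_of_add_sum_eq ha (by omega : a + l.sum = b + 1)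

theorem stmt14 (a b : ℕ) (l : List ℕ) (ha : 1 ≤ a) (hab : a ≤ b)
    (hl : ∀ x ∈ l, 2 ≤ x) (hsum : l.sum = b - a + 1) :
    SigmaPi a b l = (-1)^l.length *
      X ^ (l.length * a +
        ∑ t ∈ Finset.range l.length, (l.length - 1 - t) * l.getD t 0) :=
  stmt14_general a b l ha hab hsum
end
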